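/- arXiv:2401.15460 — 3 statements merged into one kernel-verified Lean document; each statement's English description precedes it below -/
import Mathlib

section
/- Let β > 0 and define f : ℝ → ℝ by f(x) = (e^{βx} - 1)/x for x ≠ 0 and f(0) = β. Then for every a ∈ ℝ, the function g_a(x) = |1 - f(x)/f(x+a)| is nondecreasing on [0, ∞). -/
open Real Set Filter




noncomputable def fAux (β x : ℝ) : ℝ := if x = 0 then β else (Real.exp (β * x) - 1) / x

noncomputable def fD (β x : ℝ) : ℝ := ((β*x - 1) * Real.exp (β*x) + 1) / x^2

noncomputable def fDD (β x : ℝ) : ℝ :=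
  (β^2*x^2 * Real.exp (β*x) - 2*(β*x - 1) * Real.exp (β*x) - 2) / x^3

lemma fAux_pos (β : ℝ) (hβ : 0 < β) (x : ℝ) : 0 < fAux β x := by
  unfold fAux
  rcases lt_trichotomy x 0 with h | h | h
  · rw [if_neg h.ne]
    apply div_pos_of_neg_of_neg _ h
    have : β * x < 0 := mul_neg_of_pos_of_neg hβ h
    simpa using Real.exp_lt_one_iff.mpr this
  · simpa [h] using hβ
  · rw [if_neg h.ne']
    apply div_pos _ h
    have : 0 < β * x := mul_pos hβ h
    simpa using Real.one_lt_exp_iff.mpr this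

lemma aux1 (u : ℝ) : 0 ≤ (u - 1) * Real.exp u + 1 := by
  have h1 := Real.add_one_le_exp (-u)
  have h2 : Real.exp u * Real.exp (-u) = 1 := by rw [← Real.exp_add]; simp
  nlinarith [Real.exp_pos u]

lemma chi_mono : Monotone (fun u : ℝ => (u - 2) * Real.exp u + u + 2) := by
  apply monotone_of_hasDerivAt_nonneg (f' := fun u => (u - 1) * Real.exp u + 1)
  · intro u
    have h1 : HasDerivAt (fun u : ℝ => (u - 2) * Real.exp u)
        (1 * Real.exp u + (u - 2) * Real.exp u) u :=
      ((hasDerivAt_id u).sub_const 2).mul (Real.hasDerivAt_exp u)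
    have h2 := (h1.add (hasDerivAt_id u)).add_const 2
    refine h2.congr_deriv ?_
    ring
  · intro u
    exact aux1 u

lemma chi_nonneg {u : ℝ} (hu : 0 ≤ u) : 0 ≤ (u - 2) * Real.exp u + u + 2 := by
  have := chi_mono hu
  simpa using this

lemma chi_nonpos {u : ℝ} (hu : u ≤ 0) : (u - 2) * Real.exp u + u + 2 ≤ 0 := by
  have := chi_mono hu
  simpa using this

lemma m_mono : Monotone (fun u : ℝ => 2 * Real.exp u - u^2 - 2*u - 2) := by
  apply monotone_of_hasDerivAt_nonneg (f' := fun u => 2 * Real.exp u - 2*u - 2)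
  · intro u
    have h1 := ((Real.hasDerivAt_exp u).const_mul 2).sub ((hasDerivAt_pow 2 u))
    have h2 := (h1.sub ((hasDerivAt_id u).const_mul 2)).sub_const 2
    refine h2.congr_deriv ?_
    ring
  · intro u
    have := Real.add_one_le_exp u
    simp only [Pi.zero_apply]
    nlinarith

lemma N_hasDeriv (u : ℝ) : HasDerivAt (fun u : ℝ => Real.exp u ^ 2 - (u^2 + 2) * Real.exp u + 1)
    (Real.exp u * (2 * Real.exp u - u^2 - 2*u - 2)) u := by
  have h1 : HasDerivAt (fun u : ℝ => Real.exp u ^ 2)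
      ((2 : ℕ) * Real.exp u ^ 1 * Real.exp u) u := (Real.hasDerivAt_exp u).pow 2
  have h2 : HasDerivAt (fun u : ℝ => (u^2 + 2) * Real.exp u)
      (((2:ℕ) * u ^ (2-1)) * Real.exp u + (u^2 + 2) * Real.exp u) u :=
    (((hasDerivAt_pow 2 u).add_const 2)).mul (Real.hasDerivAt_exp u)
  have h3 := (h1.sub h2).add_const 1
  refine h3.congr_deriv ?_
  push_cast
  ring

lemma N_nonneg (u : ℝ) : 0 ≤ Real.exp u ^ 2 - (u^2 + 2) * Real.exp u + 1 := by
  have hm : ∀ v : ℝ, 0 ≤ v → 0 ≤ 2 * Real.exp v - v^2 - 2*v - 2 := by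
    intro v hv
    have := m_mono hv
    simpa using this
  have hm' : ∀ v : ℝ, v ≤ 0 → 2 * Real.exp v - v^2 - 2*v - 2 ≤ 0 := by
    intro v hv
    have := m_mono hv
    simpa using this
  have hN0 : Real.exp (0:ℝ) ^ 2 - ((0:ℝ)^2 + 2) * Real.exp 0 + 1 = 0 := by norm_num
  rcases le_total 0 u with hu | hu
  · have hmon : MonotoneOn (fun u : ℝ => Real.exp u ^ 2 - (u^2 + 2) * Real.exp u + 1) (Ici 0) := by
      apply monotoneOn_of_hasDerivWithinAt_nonneg (convex_Ici 0)
        (f' := fun u => Real.exp u * (2 * Real.exp u - u^2 - 2*u - 2))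
      · exact fun x hx => (N_hasDeriv x).continuousAt.continuousWithinAt
      · exact fun x _ => (N_hasDeriv x).hasDerivWithinAt
      · intro x hx
        rw [interior_Ici] at hx
        exact mul_nonneg (Real.exp_pos x).le (hm x (le_of_lt hx))
    have := hmon self_mem_Ici hu hu
    simpa using this.trans_eq' hN0
  · have hant : AntitoneOn (fun u : ℝ => Real.exp u ^ 2 - (u^2 + 2) * Real.exp u + 1) (Iic 0) := by
      apply antitoneOn_of_hasDerivWithinAt_nonpos (convex_Iic 0)
        (f' := fun u => Real.exp u * (2 * Real.exp u - u^2 - 2*u - 2))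
      · exact fun x hx => (N_hasDeriv x).continuousAt.continuousWithinAt
      · exact fun x _ => (N_hasDeriv x).hasDerivWithinAt
      · intro x hx
        rw [interior_Iic] at hx
        exact mul_nonpos_of_nonneg_of_nonpos (Real.exp_pos x).le (hm' x (le_of_lt hx))
    have := hant hu self_mem_Iic hu
    simpa using this.trans_eq' hN0







lemma expaff_hasDeriv (β x : ℝ) :
    HasDerivAt (fun y : ℝ => Real.exp (β * y)) (β * Real.exp (β * x)) x := by
  have h1 : HasDerivAt (fun y : ℝ => β * y) β x := by
    simpa using (hasDerivAt_id x).const_mul β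
  have := (Real.hasDerivAt_exp (β * x)).comp x h1
  simpa [mul_comm, Function.comp_def] using this

lemma fAux_eventuallyEq {β x : ℝ} (hx : x ≠ 0) :
    fAux β =ᶠ[nhds x] fun y => (Real.exp (β * y) - 1) / y := by
  filter_upwards [eventually_ne_nhds hx] with y hy
  simp [fAux, hy]

lemma fAux_hasDerivAt (β : ℝ) {x : ℝ} (hx : x ≠ 0) : HasDerivAt (fAux β) (fD β x) x := by
  have h1 : HasDerivAt (fun y : ℝ => (Real.exp (β * y) - 1) / y)
      ((β * Real.exp (β * x) * x - (Real.exp (β * x) - 1) * 1) / x ^ 2) x :=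
    ((expaff_hasDeriv β x).sub_const 1).div (hasDerivAt_id x) hx
  have h2 : fD β x = (β * Real.exp (β * x) * x - (Real.exp (β * x) - 1) * 1) / x ^ 2 := by
    unfold fD; ring_nf
  rw [h2]
  exact HasDerivAt.congr_of_eventuallyEq h1 (fAux_eventuallyEq hx)

lemma fD_hasDerivAt (β : ℝ) {x : ℝ} (hx : x ≠ 0) : HasDerivAt (fD β) (fDD β x) x := by
  have hnum : HasDerivAt (fun y : ℝ => (β*y - 1) * Real.exp (β*y) + 1)
      (β * Real.exp (β * x) + (β*x - 1) * (β * Real.exp (β * x))) x := by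
    have h1 : HasDerivAt (fun y : ℝ => β * y - 1) β x := by
      simpa using ((hasDerivAt_id x).const_mul β).sub_const 1
    exact (h1.mul (expaff_hasDeriv β x)).add_const 1
  have hden : HasDerivAt (fun y : ℝ => y ^ 2) ((2:ℕ) * x ^ (2-1)) x := hasDerivAt_pow 2 x
  have h := hnum.div hden (pow_ne_zero 2 hx)
  have h2 : fDD β x = ((β * Real.exp (β * x) + (β*x - 1) * (β * Real.exp (β * x))) * x ^ 2 -
      ((β*x - 1) * Real.exp (β*x) + 1) * ((2:ℕ) * x ^ (2-1))) / (x ^ 2) ^ 2 := by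
    unfold fDD
    field_simp
    ring
  rw [h2]
  exact h

lemma fAux_continuous (β : ℝ) : Continuous (fAux β) := by
  rw [continuous_iff_continuousAt]
  intro x
  rcases eq_or_ne x 0 with rfl | hx
  · have hd : HasDerivAt (fun y : ℝ => Real.exp (β * y)) β 0 := by
      simpa using expaff_hasDeriv β 0
    have hslope := hasDerivAt_iff_tendsto_slope.mp hd
    have htend : Tendsto (fAux β) (nhdsWithin 0 {(0:ℝ)}ᶜ) (nhds β) := by
      apply hslope.congr'
      filter_upwards [self_mem_nhdsWithin] with y hy
      have hy' : y ≠ 0 := hy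
      simp [slope_def_field, fAux, hy']
    rw [ContinuousAt]
    have h0 : fAux β 0 = β := by simp [fAux]
    rw [h0, ← nhdsNE_sup_pure, tendsto_sup]
    exact ⟨htend, by simpa [h0] using tendsto_pure_nhds (fAux β) 0⟩
  · exact (fAux_hasDerivAt β hx).continuousAt

lemma fD_nonneg (β : ℝ) (x : ℝ) : 0 ≤ fD β x := by
  unfold fD
  exact div_nonneg (aux1 (β * x)) (sq_nonneg x)

lemma fAux_mono (β : ℝ) (hβ : 0 < β) : Monotone (fAux β) := by
  have hIci : MonotoneOn (fAux β) (Ici 0) := by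
    apply monotoneOn_of_hasDerivWithinAt_nonneg (convex_Ici 0) (f' := fD β)
      ((fAux_continuous β).continuousOn)
    · intro x hx
      rw [interior_Ici] at hx
      exact (fAux_hasDerivAt β (ne_of_gt hx)).hasDerivWithinAt
    · exact fun x _ => fD_nonneg β x
  have hIic : MonotoneOn (fAux β) (Iic 0) := by
    apply monotoneOn_of_hasDerivWithinAt_nonneg (convex_Iic 0) (f' := fD β)
      ((fAux_continuous β).continuousOn)
    · intro x hx
      rw [interior_Iic] at hx
      exact (fAux_hasDerivAt β (ne_of_lt hx)).hasDerivWithinAt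
    · exact fun x _ => fD_nonneg β x
  intro t u htu
  rcases le_total 0 t with h | h
  · exact hIci h (h.trans htu) htu
  · rcases le_total u 0 with h2 | h2
    · exact hIic h h2 htu
    · exact (hIic h self_mem_Iic h).trans (hIci self_mem_Ici h2 h2)

-- cross lemmas at β/2
lemma cross_pos (β : ℝ) (hβ : 0 < β) {x : ℝ} (hx : 0 < x) :
    β * fAux β x ≤ 2 * fD β x := by
  have hchi := chi_nonneg (mul_nonneg hβ.le hx.le)
  unfold fAux fD
  rw [if_neg hx.ne']
  have hx0 : x ≠ 0 := hx.ne'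
  have h2 : β * ((Real.exp (β * x) - 1) / x) = (β * x * (Real.exp (β * x) - 1)) / x ^ 2 := by
    field_simp [hx0]
  have h3 : 2 * (((β * x - 1) * Real.exp (β * x) + 1) / x ^ 2) =
      (2 * ((β * x - 1) * Real.exp (β * x) + 1)) / x ^ 2 := by ring
  rw [h2, h3, div_le_div_iff_of_pos_right (by positivity)]
  nlinarith

lemma cross_neg (β : ℝ) (hβ : 0 < β) {x : ℝ} (hx : x < 0) :
    2 * fD β x ≤ β * fAux β x := by
  have hchi := chi_nonpos (u := β * x) (by nlinarith)
  unfold fAux fD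
  rw [if_neg hx.ne]
  have hx0 : x ≠ 0 := hx.ne
  have h2 : β * ((Real.exp (β * x) - 1) / x) = (β * x * (Real.exp (β * x) - 1)) / x ^ 2 := by
    field_simp [hx0]
  have h3 : 2 * (((β * x - 1) * Real.exp (β * x) + 1) / x ^ 2) =
      (2 * ((β * x - 1) * Real.exp (β * x) + 1)) / x ^ 2 := by ring
  rw [h2, h3, div_le_div_iff_of_pos_right (by positivity)]
  nlinarith

lemma numId (β : ℝ) {x : ℝ} (hx : x ≠ 0) :
    fDD β x * fAux β x - fD β x * fD β x
      = (Real.exp (β*x) ^ 2 - ((β*x)^2 + 2) * Real.exp (β*x) + 1) / x^4 := by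
  unfold fDD fD fAux
  rw [if_neg hx]
  field_simp
  ring

lemma phi_deriv_nonneg (β : ℝ) (hβ : 0 < β) {x : ℝ} (hx : x ≠ 0) :
    0 ≤ (fDD β x * fAux β x - fD β x * fD β x) / (fAux β x) ^ 2 := by
  apply div_nonneg _ (sq_nonneg _)
  rw [numId β hx]
  exact div_nonneg (N_nonneg (β * x)) (by positivity)

lemma phi_hasDerivAt (β : ℝ) (hβ : 0 < β) {x : ℝ} (hx : x ≠ 0) :
    HasDerivAt (fun z => fD β z / fAux β z)
      ((fDD β x * fAux β x - fD β x * fD β x) / (fAux β x) ^ 2) x :=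
  (fD_hasDerivAt β hx).div (fAux_hasDerivAt β hx) (fAux_pos β hβ x).ne'

lemma phi_contOn (β : ℝ) (hβ : 0 < β) {S : Set ℝ} (hS : ∀ x ∈ S, x ≠ 0) :
    ContinuousOn (fun z => fD β z / fAux β z) S := fun x hx =>
  (((fD_hasDerivAt β (hS x hx)).continuousAt).div ((fAux_continuous β).continuousAt)
    (fAux_pos β hβ x).ne').continuousWithinAt

lemma phi_mono_pos (β : ℝ) (hβ : 0 < β) :
    MonotoneOn (fun z => fD β z / fAux β z) (Ioi 0) := by
  apply monotoneOn_of_hasDerivWithinAt_nonneg (convex_Ioi 0)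
    (f' := fun x => (fDD β x * fAux β x - fD β x * fD β x) / (fAux β x) ^ 2)
    (phi_contOn β hβ (fun x hx => (ne_of_gt hx)))
  · intro x hx
    rw [interior_Ioi] at hx
    exact (phi_hasDerivAt β hβ (ne_of_gt hx)).hasDerivWithinAt
  · intro x hx
    rw [interior_Ioi] at hx
    exact phi_deriv_nonneg β hβ (ne_of_gt hx)

lemma phi_mono_neg (β : ℝ) (hβ : 0 < β) :
    MonotoneOn (fun z => fD β z / fAux β z) (Iio 0) := by
  apply monotoneOn_of_hasDerivWithinAt_nonneg (convex_Iio 0)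
    (f' := fun x => (fDD β x * fAux β x - fD β x * fD β x) / (fAux β x) ^ 2)
    (phi_contOn β hβ (fun x hx => (ne_of_lt hx)))
  · intro x hx
    rw [interior_Iio] at hx
    exact (phi_hasDerivAt β hβ (ne_of_lt hx)).hasDerivWithinAt
  · intro x hx
    rw [interior_Iio] at hx
    exact phi_deriv_nonneg β hβ (ne_of_lt hx)

lemma phi_le (β : ℝ) (hβ : 0 < β) {x y : ℝ} (hx : x ≠ 0) (hy : y ≠ 0) (hxy : x ≤ y) :
    fD β x * fAux β y ≤ fD β y * fAux β x := by
  have fx := fAux_pos β hβ x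
  have fy := fAux_pos β hβ y
  rw [← div_le_div_iff₀ fx fy]
  rcases lt_or_gt_of_ne hx with hx' | hx'
  · rcases lt_or_gt_of_ne hy with hy' | hy'
    · exact phi_mono_neg β hβ hx' hy' hxy
    · have h1 : fD β x / fAux β x ≤ β / 2 := by
        rw [div_le_div_iff₀ fx (by norm_num)]
        linarith [cross_neg β hβ hx']
      have h2 : β / 2 ≤ fD β y / fAux β y := by
        rw [div_le_div_iff₀ (by norm_num) fy]
        linarith [cross_pos β hβ hy']
      exact h1.trans h2
  · exact phi_mono_pos β hβ hx' (hx'.trans_le hxy) hxy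

lemma ratio_key (β : ℝ) (hβ : 0 < β) {b t u : ℝ} (hb : 0 ≤ b) (htu : t ≤ u) :
    fAux β (t + b) * fAux β u ≤ fAux β (u + b) * fAux β t := by
  rcases eq_or_lt_of_le hb with rfl | hb'
  · simp [mul_comm]
  set h : ℝ → ℝ := fun z => fAux β (z + b) / fAux β z with hh
  set hval : ℝ → ℝ := fun x =>
    (fD β (x + b) * fAux β x - fAux β (x + b) * fD β x) / (fAux β x) ^ 2 with hhval
  have hder : ∀ x : ℝ, x ≠ 0 → x + b ≠ 0 → HasDerivAt h (hval x) x := by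
    intro x hx hxb
    have hs : HasDerivAt (fun z : ℝ => fAux β (z + b)) (fD β (x + b)) x := by
      have := (fAux_hasDerivAt β hxb).comp x ((hasDerivAt_id x).add_const b)
      simpa [Function.comp_def] using this
    exact hs.div (fAux_hasDerivAt β hx) (fAux_pos β hβ x).ne'
  have hnn : ∀ x : ℝ, x ≠ 0 → x + b ≠ 0 → 0 ≤ hval x := by
    intro x hx hxb
    apply div_nonneg _ (sq_nonneg _)
    have := phi_le β hβ hx hxb (by linarith)
    linarith
  have hcont : Continuous h :=
    ((fAux_continuous β).comp (continuous_id.add continuous_const)).div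
      (fAux_continuous β) (fun x => (fAux_pos β hβ x).ne')
  have m1 : MonotoneOn h (Iic (-b)) := by
    apply monotoneOn_of_hasDerivWithinAt_nonneg (convex_Iic _) hcont.continuousOn
      (f' := hval)
    · intro x hx
      rw [interior_Iic] at hx
      exact (hder x (by intro h0; rw [h0] at hx; exact absurd hx (by simp; linarith))
        (by intro h0; nlinarith [mem_Iio.mp hx])).hasDerivWithinAt
    · intro x hx
      rw [interior_Iic] at hx
      exact hnn x (by intro h0; rw [h0] at hx; exact absurd hx (by simp; linarith))
        (by intro h0; nlinarith [mem_Iio.mp hx])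
  have m2 : MonotoneOn h (Icc (-b) 0) := by
    apply monotoneOn_of_hasDerivWithinAt_nonneg (convex_Icc _ _) hcont.continuousOn
      (f' := hval)
    · intro x hx
      rw [interior_Icc] at hx
      exact (hder x (ne_of_lt hx.2) (by nlinarith [hx.1])).hasDerivWithinAt
    · intro x hx
      rw [interior_Icc] at hx
      exact hnn x (ne_of_lt hx.2) (by nlinarith [hx.1])
  have m3 : MonotoneOn h (Ici 0) := by
    apply monotoneOn_of_hasDerivWithinAt_nonneg (convex_Ici _) hcont.continuousOn
      (f' := hval)
    · intro x hx
      rw [interior_Ici] at hx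
      exact (hder x (ne_of_gt hx) (by nlinarith [mem_Ioi.mp hx])).hasDerivWithinAt
    · intro x hx
      rw [interior_Ici] at hx
      exact hnn x (ne_of_gt hx) (by nlinarith [mem_Ioi.mp hx])
  have hb0 : -b ≤ 0 := by linarith
  have hmain : h t ≤ h u := by
    rcases le_total u (-b) with h1 | h1
    · exact m1 (htu.trans h1) h1 htu
    · rcases le_total t (-b) with h2 | h2
      · have ht1 : h t ≤ h (-b) := m1 h2 self_mem_Iic h2
        rcases le_total u 0 with h3 | h3
        · exact ht1.trans (m2 (left_mem_Icc.mpr hb0) ⟨h1, h3⟩ h1)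
        · exact ht1.trans ((m2 (left_mem_Icc.mpr hb0) (right_mem_Icc.mpr hb0) hb0).trans
            (m3 self_mem_Ici h3 h3))
      · rcases le_total u 0 with h3 | h3
        · exact m2 ⟨h2, htu.trans h3⟩ ⟨h1, h3⟩ htu
        · rcases le_total t 0 with h4 | h4
          · exact (m2 ⟨h2, h4⟩ (right_mem_Icc.mpr hb0) h4).trans (m3 self_mem_Ici h3 h3)
          · exact m3 h4 (h4.trans htu) htu
  rw [hh] at hmain
  simp only [div_le_div_iff₀ (fAux_pos β hβ t) (fAux_pos β hβ u)] at hmain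
  linarith

theorem stmt0 (β : ℝ) (hβ : 0 < β) (a : ℝ) :
    MonotoneOn (fun x => |1 - fAux β x / fAux β (x + a)|) (Set.Ici (0 : ℝ)) := by
  intro x _ y _ hxy
  simp only
  have hmono := fAux_mono β hβ
  have px := fAux_pos β hβ x
  have py := fAux_pos β hβ y
  have pxa := fAux_pos β hβ (x + a)
  have pya := fAux_pos β hβ (y + a)
  rcases le_total 0 a with ha | ha
  · have hx1 : fAux β x / fAux β (x + a) ≤ 1 :=
      (div_le_one pxa).mpr (hmono (by linarith))
    have hy1 : fAux β y / fAux β (y + a) ≤ 1 :=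
      (div_le_one pya).mpr (hmono (by linarith))
    rw [abs_of_nonneg (by linarith), abs_of_nonneg (by linarith)]
    have hkey := ratio_key β hβ ha hxy
    have : fAux β y / fAux β (y + a) ≤ fAux β x / fAux β (x + a) := by
      rw [div_le_div_iff₀ pya pxa]
      linarith
    linarith
  · have hx1 : 1 ≤ fAux β x / fAux β (x + a) :=
      (one_le_div pxa).mpr (hmono (by linarith))
    have hy1 : 1 ≤ fAux β y / fAux β (y + a) :=
      (one_le_div pya).mpr (hmono (by linarith))
    rw [abs_of_nonpos (by linarith), abs_of_nonpos (by linarith)]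
    have hkey := ratio_key β hβ (b := -a) (t := x + a) (u := y + a)
      (by linarith) (by linarith)
    rw [show x + a + -a = x by ring, show y + a + -a = y by ring] at hkey
    have : fAux β x / fAux β (x + a) ≤ fAux β y / fAux β (y + a) := by
      rw [div_le_div_iff₀ pxa pya]
      linarith
    linarith
end

section
/- Let ρ > 0, β > 0, k ∈ ℤ \ {0}, s = 2πik/β. Then |ρ(ρ+s)β²/(s(e^{-2ρβ} − e^{-ρβ}))| ≤ √2·β·e^{2ρβ}, provided ρβ < 2π|k|. -/
theorem stmt12 (ρ β : ℝ) (hρ : 0 < ρ) (hβ : 0 < β) (k : ℤ) (hk : k ≠ 0)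
    (hsmall : ρ * β < 2 * Real.pi * |(k : ℝ)|) :
    ‖(ρ : ℂ) * ((ρ : ℂ) + 2 * Real.pi * k * Complex.I / β) * (β : ℂ) ^ 2 /
        ((2 * Real.pi * k * Complex.I / β) *
          ((Real.exp (-(2 * ρ * β)) : ℂ) - (Real.exp (-(ρ * β)) : ℂ)))‖ ≤
      Real.sqrt 2 * β * Real.exp (2 * ρ * β) := by
  have hπ := Real.pi_pos
  have hkabs : (1:ℝ) ≤ |(k:ℝ)| := by
    have h1 : (1:ℤ) ≤ |k| := Int.one_le_abs hk
    have : ((1:ℤ):ℝ) ≤ (|k| : ℝ) := by exact_mod_cast h1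
    simpa using this
  set c : ℝ := 2 * Real.pi * k / β with hc
  have hcabs : |c| = 2 * Real.pi * |(k:ℝ)| / β := by
    rw [hc, abs_div, abs_mul, abs_of_pos (by positivity : (0:ℝ) < 2 * Real.pi),
      abs_of_pos hβ]
  have hcpos : 0 < |c| := by rw [hcabs]; positivity
  have hρc : ρ < |c| := by
    rw [hcabs, lt_div_iff₀ hβ]; linarith
  set D : ℝ := Real.exp (-(ρ * β)) - Real.exp (-(2 * ρ * β)) with hD
  have hDpos : 0 < D := by
    have : Real.exp (-(2 * ρ * β)) < Real.exp (-(ρ * β)) := by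
      apply Real.exp_lt_exp.mpr; nlinarith
    linarith
  have key : ‖(ρ : ℂ) * ((ρ : ℂ) + 2 * Real.pi * k * Complex.I / β) * (β : ℂ) ^ 2 /
        ((2 * Real.pi * k * Complex.I / β) *
          ((Real.exp (-(2 * ρ * β)) : ℂ) - (Real.exp (-(ρ * β)) : ℂ)))‖ =
      ρ * Real.sqrt (ρ^2 + c^2) * β^2 / (|c| * D) := by
    have h1 : (2 * Real.pi * (k:ℂ) * Complex.I / β : ℂ) = (c:ℂ) * Complex.I := by
      rw [hc]; push_cast; ring
    have h2 : ((Real.exp (-(2 * ρ * β)) : ℂ) - (Real.exp (-(ρ * β)) : ℂ)) =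
        ((Real.exp (-(2 * ρ * β)) - Real.exp (-(ρ * β)) : ℝ) : ℂ) := by push_cast; ring
    rw [h1, h2, norm_div, norm_mul, norm_mul, norm_mul, norm_pow]
    rw [show ((ρ:ℂ) + (c:ℂ) * Complex.I) = ((ρ:ℝ):ℂ) + ((c:ℝ):ℂ) * Complex.I from rfl,
      Complex.norm_add_mul_I, Complex.norm_real, Real.norm_eq_abs, Complex.norm_real, Real.norm_eq_abs, norm_mul,
      Complex.norm_I, Complex.norm_real, Real.norm_eq_abs]
    rw [abs_of_pos hρ, abs_of_pos hβ]
    rw [Complex.norm_real, Real.norm_eq_abs, abs_of_neg (by linarith : Real.exp (-(2 * ρ * β)) - Real.exp (-(ρ * β)) < 0)]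
    rw [hD]; ring_nf
  rw [key]
  have hsq : Real.sqrt (ρ^2 + c^2) ≤ Real.sqrt 2 * |c| := by
    have : Real.sqrt 2 * |c| = Real.sqrt (2 * c^2) := by
      rw [Real.sqrt_mul (by norm_num), Real.sqrt_sq_eq_abs]
    rw [this]
    apply Real.sqrt_le_sqrt
    nlinarith [sq_abs c]
  have hED : Real.exp (2 * ρ * β) * D = Real.exp (ρ * β) - 1 := by
    rw [hD]
    rw [mul_sub, ← Real.exp_add, ← Real.exp_add]
    ring_nf
    norm_num [Real.exp_zero]
    ring
  have htle : ρ * β ≤ Real.exp (ρ * β) - 1 := by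
    have := Real.add_one_le_exp (ρ * β); linarith
  rw [div_le_iff₀ (by positivity)]
  have h2pos : (0:ℝ) ≤ Real.sqrt 2 := Real.sqrt_nonneg 2
  have step1 : ρ * Real.sqrt (ρ^2 + c^2) * β^2 ≤ ρ * (Real.sqrt 2 * |c|) * β^2 :=
    mul_le_mul_of_nonneg_right (mul_le_mul_of_nonneg_left hsq hρ.le) (sq_nonneg β)
  have step2 : ρ * (Real.sqrt 2 * |c|) * β^2 ≤ Real.sqrt 2 * β * Real.exp (2 * ρ * β) * (|c| * D) := by
    have : ρ * β ≤ Real.exp (2 * ρ * β) * D := by rw [hED]; exact htle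
    nlinarith [hcpos.le, mul_le_mul_of_nonneg_left this (mul_nonneg h2pos (mul_nonneg hβ.le hcpos.le))]
  linarith
end

section
/- For ρ > 0 and |ε| < ρ, lim_{ρ' → ∞} ((e^{ρ'β} − 1)(ρ' − |ε|)) / ((e^{(ρ'−|ε|)β} − 1)·ρ') = e^{|ε|β}, and for every ρ' ≥ |ε| the quotient ((e^{ρ'β} − 1)(ρ' − |ε|)) / ((e^{(ρ'−|ε|)β} − 1)·ρ') is at most e^{|ε|β}. -/
open Filter Real

theorem stmt15 (ρ ε β : ℝ) (hρ : 0 < ρ) (hε : |ε| < ρ) (hβ : 0 < β) :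
    Filter.Tendsto (fun ρ' : ℝ =>
        (Real.exp (ρ' * β) - 1) * (ρ' - |ε|) /
          ((Real.exp ((ρ' - |ε|) * β) - 1) * ρ'))
      Filter.atTop (nhds (Real.exp (|ε| * β))) ∧
    ∀ ρ' : ℝ, |ε| ≤ ρ' →
      (Real.exp (ρ' * β) - 1) * (ρ' - |ε|) /
          ((Real.exp ((ρ' - |ε|) * β) - 1) * ρ') ≤ Real.exp (|ε| * β) := by
  set a := |ε| with ha
  have ha0 : 0 ≤ a := abs_nonneg ε
  constructor
  · -- limit part
    have hkey : ∀ x : ℝ,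
        (Real.exp (x * β) - 1) * (x - a) / ((Real.exp ((x - a) * β) - 1) * x)
          = ((1 - Real.exp (-(x * β))) / (Real.exp (-(a * β)) - Real.exp (-(x * β))))
            * ((x - a) / x) := by
      intro x
      rw [div_mul_div_comm]
      have hE : Real.exp (-(x * β)) ≠ 0 := Real.exp_ne_zero _
      have h1 : Real.exp (-(x * β)) * (Real.exp (x * β) - 1)
          = 1 - Real.exp (-(x * β)) := by
        rw [mul_sub, ← Real.exp_add]; simp
      have h2 : Real.exp (-(x * β)) * (Real.exp ((x - a) * β) - 1)
          = Real.exp (-(a * β)) - Real.exp (-(x * β)) := by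
        rw [mul_sub, ← Real.exp_add, show -(x * β) + (x - a) * β = -(a * β) by ring,
          mul_one]
      rw [← mul_div_mul_left ((Real.exp (x * β) - 1) * (x - a))
            ((Real.exp ((x - a) * β) - 1) * x) hE, ← mul_assoc, ← mul_assoc, h1, h2]
    have hE : Tendsto (fun x : ℝ => Real.exp (-(x * β))) atTop (nhds 0) := by
      apply Real.tendsto_exp_atBot.comp
      apply tendsto_neg_atBot_iff.mpr
      exact Tendsto.atTop_mul_const hβ tendsto_id
    have h1 : Tendsto (fun x : ℝ =>
        (1 - Real.exp (-(x * β))) / (Real.exp (-(a * β)) - Real.exp (-(x * β))))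
        atTop (nhds (Real.exp (a * β))) := by
      have hnum : Tendsto (fun x : ℝ => 1 - Real.exp (-(x * β))) atTop (nhds (1 - 0)) :=
        tendsto_const_nhds.sub hE
      have hden : Tendsto (fun x : ℝ => Real.exp (-(a * β)) - Real.exp (-(x * β)))
          atTop (nhds (Real.exp (-(a * β)) - 0)) := tendsto_const_nhds.sub hE
      have := hnum.div hden (by simp [Real.exp_ne_zero])
      simpa [Real.exp_neg, Pi.div_def] using this
    have h2 : Tendsto (fun x : ℝ => (x - a) / x) atTop (nhds 1) := by
      have heq : (fun x : ℝ => (x - a) / x) =ᶠ[atTop] fun x => 1 - a * x⁻¹ := by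
        filter_upwards [eventually_gt_atTop 0] with x hx
        field_simp
      rw [Filter.tendsto_congr' heq]
      have h : Tendsto (fun x : ℝ => 1 - a * x⁻¹) atTop (nhds (1 - a * 0)) :=
        tendsto_const_nhds.sub ((tendsto_inv_atTop_zero (𝕜 := ℝ)).const_mul a)
      simpa using h
    have := h1.mul h2
    simp only [mul_one] at this
    exact (Filter.tendsto_congr hkey).mpr this
  · -- inequality part
    intro x hx
    rcases eq_or_lt_of_le hx with heq | hlt
    · simp [← heq]
      positivity
    · have hx0 : 0 < x := lt_of_le_of_lt ha0 hlt
      have hden : 0 < (Real.exp ((x - a) * β) - 1) * x := by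
        have : (0:ℝ) < (x - a) * β := mul_pos (by linarith) hβ
        have := Real.exp_lt_exp.mpr this
        simp only [Real.exp_zero] at this
        nlinarith [Real.exp_zero]
      rw [div_le_iff₀ hden]
      have hax : a / x ≤ 1 := by rw [div_le_one hx0]; linarith
      have hconv := convexOn_exp.2 (Set.mem_univ (0:ℝ)) (Set.mem_univ (x * β))
        (by linarith : (0:ℝ) ≤ 1 - a / x) (div_nonneg ha0 hx0.le) (by ring)
      simp only [smul_eq_mul, mul_zero, zero_add, Real.exp_zero, mul_one] at hconv
      rw [show a / x * (x * β) = a * β by field_simp] at hconv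
      have hconv' : x * Real.exp (a * β) ≤ x - a + a * Real.exp (x * β) := by
        have h := mul_le_mul_of_nonneg_left hconv hx0.le
        have hxa : x * (1 - a / x + a / x * Real.exp (x * β))
            = x - a + a * Real.exp (x * β) := by field_simp
        linarith
      have hmul : Real.exp (a * β) * Real.exp ((x - a) * β) = Real.exp (x * β) := by
        rw [← Real.exp_add]; ring_nf
      nlinarith [hconv', hmul]
end
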